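/- Let d ≥ 3, let a be a symmetric C¹ matrix-valued field on ℝ^d, b a continuous vector field, m a C¹ positive function, and ℬ a C¹ skew-symmetric matrix-valued field satisfying ∂_i ℬ_{ij} = m b_j + ∂_i(m a_{ij}) for each j (summation over i). Set 𝒜 = m a − ℬ. Then for every C² function u on ℝ^d one has the pointwise identity −∂_i( 𝒜_{ij} ∂_j u ) = m ( −a_{ij}∂_{ij}u + b_j∂_j u ). In particular, u solves −a_{ij}∂_{ij}u + b_j∂_j u = f if and only if it solves the divergence-form equation −div(𝒜∇u) = m f. -/

import Mathlib

open MeasureTheory Filter ENNReal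

noncomputable section

/-- Euclidean-like space `ℝ^d`. -/
abbrev Ed (d : ℕ) := Fin d → ℝ

/-- First partial derivative `∂ᵢ u`. -/
def pd {d : ℕ} (u : Ed d → ℝ) (i : Fin d) (x : Ed d) : ℝ :=
  fderiv ℝ u x (Pi.single i 1)

/-- Second partial derivative `∂ᵢ∂ⱼ u`. -/
def pd2 {d : ℕ} (u : Ed d → ℝ) (i j : Fin d) (x : Ed d) : ℝ :=
  fderiv ℝ (fun y => fderiv ℝ u y (Pi.single j 1)) x (Pi.single i 1)

/-- `ℤ^d`-periodicity of a function on `ℝ^d`. -/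
def ZPeriodic {d : ℕ} (g : Ed d → ℝ) : Prop :=
  ∀ (x : Ed d) (z : Fin d → ℤ), g (x + fun i => (z i : ℝ)) = g x

/-- Uniform Hölder continuity of exponent `α` (class `C^{0,α}_unif`). -/
def UnifHolder {d : ℕ} (α : ℝ) (g : Ed d → ℝ) : Prop :=
  ∃ C : ℝ, ∀ x y : Ed d, |g x - g y| ≤ C * ‖x - y‖ ^ α

/-- Uniform ellipticity of a matrix-valued field. -/
def UnifElliptic {d : ℕ} (A : Ed d → Fin d → Fin d → ℝ) : Prop :=
  ∃ ν : ℝ, 0 < ν ∧ ∀ (x : Ed d) (ξ : Fin d → ℝ),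
    ν * (∑ i, ξ i ^ 2) ≤ ∑ i, ∑ j, A x i j * ξ i * ξ j

/-- Smooth compactly supported test function. -/
def IsTest {d : ℕ} (φ : Ed d → ℝ) : Prop :=
  ContDiff ℝ (⊤ : ℕ∞) φ ∧ HasCompactSupport φ

/- Auxiliary lemmas -/

lemma pd_mul {d : ℕ} {f g : Ed d → ℝ} {x : Ed d}
    (hf : DifferentiableAt ℝ f x) (hg : DifferentiableAt ℝ g x) (i : Fin d) :
    pd (fun y => f y * g y) i x = pd f i x * g x + f x * pd g i x := by
  unfold pd
  rw [fderiv_fun_mul hf hg]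
  simp only [ContinuousLinearMap.add_apply, ContinuousLinearMap.smul_apply, smul_eq_mul]
  ring

lemma pd_sub {d : ℕ} {f g : Ed d → ℝ} {x : Ed d}
    (hf : DifferentiableAt ℝ f x) (hg : DifferentiableAt ℝ g x) (i : Fin d) :
    pd (fun y => f y - g y) i x = pd f i x - pd g i x := by
  unfold pd
  rw [fderiv_fun_sub hf hg]
  simp

lemma pd_pd {d : ℕ} (u : Ed d → ℝ) (i j : Fin d) (x : Ed d) :
    pd (fun y => pd u j y) i x = pd2 u i j x := rfl

lemma contDiff_pd {d : ℕ} {u : Ed d → ℝ} (hu : ContDiff ℝ 2 u) (j : Fin d) :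
    ContDiff ℝ 1 (fun y => pd u j y) := by
  have h : ContDiff ℝ 1 (fderiv ℝ u) := hu.fderiv_right (by norm_num)
  exact h.clm_apply contDiff_const

lemma pd2_eq {d : ℕ} {u : Ed d → ℝ} (hu : ContDiff ℝ 2 u) (i j : Fin d) (x : Ed d) :
    pd2 u i j x = fderiv ℝ (fderiv ℝ u) x (Pi.single i 1) (Pi.single j 1) := by
  have h : ContDiff ℝ 1 (fderiv ℝ u) := hu.fderiv_right (by norm_num)
  unfold pd2
  rw [fderiv_clm_apply (h.differentiable one_ne_zero x) (differentiableAt_const _)]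
  simp

lemma pd2_symm {d : ℕ} {u : Ed d → ℝ} (hu : ContDiff ℝ 2 u) (i j : Fin d) (x : Ed d) :
    pd2 u i j x = pd2 u j i x := by
  rw [pd2_eq hu, pd2_eq hu]
  exact (hu.contDiffAt.isSymmSndFDerivAt (by norm_num)) _ _

/-- Section 4: multiplication by the invariant measure.  If `ℬ` is skew-symmetric with
`∂_i ℬ_{ij} = m b_j + ∂_i(m a_{ij})` and `𝒜 = m a - ℬ`, then pointwise
`-∂_i(𝒜_{ij}∂_j u) = m(-a_{ij}∂_{ij}u + b_j∂_j u)` for every `C²` function `u`; in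
particular `u` solves the non-divergence equation with datum `f` iff it solves
`-div(𝒜∇u) = m f`. -/
theorem divergence_form_identity
    (d : ℕ) (hd : 3 ≤ d)
    (a : Ed d → Fin d → Fin d → ℝ)
    (ha_C1 : ∀ i j, ContDiff ℝ 1 (fun x => a x i j))
    (ha_symm : ∀ x i j, a x i j = a x j i)
    (b : Ed d → Fin d → ℝ)
    (hb_cont : ∀ i, Continuous (fun x => b x i))
    (m : Ed d → ℝ)
    (hm_C1 : ContDiff ℝ 1 m)
    (hm_pos : ∀ x, 0 < m x)
    (B : Ed d → Fin d → Fin d → ℝ)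
    (hB_C1 : ∀ i j, ContDiff ℝ 1 (fun x => B x i j))
    (hB_skew : ∀ x i j, B x i j = -B x j i)
    (hB_div : ∀ x j, (∑ i, pd (fun y => B y i j) i x)
        = m x * b x j + ∑ i, pd (fun y => m y * a y i j) i x) :
    (∀ u : Ed d → ℝ, ContDiff ℝ 2 u → ∀ x,
      -(∑ i, ∑ j, pd (fun y => (m y * a y i j - B y i j) * pd u j y) i x)
        = m x * (-(∑ i, ∑ j, a x i j * pd2 u i j x) + ∑ j, b x j * pd u j x)) ∧
    (∀ u : Ed d → ℝ, ContDiff ℝ 2 u → ∀ f : Ed d → ℝ,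
      ((∀ x, -(∑ i, ∑ j, a x i j * pd2 u i j x) + ∑ j, b x j * pd u j x = f x) ↔
        (∀ x, -(∑ i, ∑ j, pd (fun y => (m y * a y i j - B y i j) * pd u j y) i x)
          = m x * f x))) := by
  have main : ∀ u : Ed d → ℝ, ContDiff ℝ 2 u → ∀ x,
      -(∑ i, ∑ j, pd (fun y => (m y * a y i j - B y i j) * pd u j y) i x)
        = m x * (-(∑ i, ∑ j, a x i j * pd2 u i j x) + ∑ j, b x j * pd u j x) := by
    intro u hu x
    have hma : ∀ i j : Fin d, DifferentiableAt ℝ (fun y => m y * a y i j) x :=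
      fun i j => ((hm_C1.mul (ha_C1 i j)).differentiable one_ne_zero) x
    have hB' : ∀ i j : Fin d, DifferentiableAt ℝ (fun y => B y i j) x :=
      fun i j => ((hB_C1 i j).differentiable one_ne_zero) x
    have hpdu : ∀ j : Fin d, DifferentiableAt ℝ (fun y => pd u j y) x :=
      fun j => ((contDiff_pd hu j).differentiable one_ne_zero) x
    have hstep : ∀ i j : Fin d,
        pd (fun y => (m y * a y i j - B y i j) * pd u j y) i x
          = (pd (fun y => m y * a y i j) i x - pd (fun y => B y i j) i x) * pd u j x
            + (m x * a x i j - B x i j) * pd2 u i j x := by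
      intro i j
      rw [pd_mul ((hma i j).fun_sub (hB' i j)) (hpdu j) i, pd_sub (hma i j) (hB' i j) i,
        pd_pd]
    have h1 : ∑ i, ∑ j, (pd (fun y => m y * a y i j) i x - pd (fun y => B y i j) i x)
          * pd u j x = -(m x * ∑ j, b x j * pd u j x) := by
      rw [Finset.sum_comm]
      have hj : ∀ j : Fin d, ∑ i, (pd (fun y => m y * a y i j) i x
          - pd (fun y => B y i j) i x) * pd u j x = -(m x * (b x j * pd u j x)) := by
        intro j
        rw [← Finset.sum_mul]
        have hs : ∑ i, (pd (fun y => m y * a y i j) i x - pd (fun y => B y i j) i x)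
            = -(m x * b x j) := by
          rw [Finset.sum_sub_distrib]
          have := hB_div x j
          linarith
        rw [hs]; ring
      simp_rw [hj]
      rw [Finset.mul_sum, ← Finset.sum_neg_distrib]
    have hB0 : ∑ i, ∑ j, B x i j * pd2 u i j x = 0 := by
      have hswap : (∑ i, ∑ j, B x i j * pd2 u i j x)
          = -∑ i, ∑ j, B x i j * pd2 u i j x := by
        conv_lhs => rw [Finset.sum_comm]
        rw [← Finset.sum_neg_distrib]
        apply Finset.sum_congr rfl
        intro j _
        rw [← Finset.sum_neg_distrib]
        apply Finset.sum_congr rfl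
        intro i _
        rw [hB_skew x j i, pd2_symm hu j i x]
        ring
      linarith
    have h2 : ∑ i, ∑ j, (m x * a x i j - B x i j) * pd2 u i j x
        = m x * ∑ i, ∑ j, a x i j * pd2 u i j x := by
      have : ∀ i j : Fin d, (m x * a x i j - B x i j) * pd2 u i j x
          = m x * (a x i j * pd2 u i j x) - B x i j * pd2 u i j x := by
        intro i j; ring
      simp_rw [this, Finset.sum_sub_distrib, ← Finset.mul_sum]
      rw [hB0]
      ring
    have key : ∑ i, ∑ j, pd (fun y => (m y * a y i j - B y i j) * pd u j y) i x
        = -(m x * ∑ j, b x j * pd u j x) + m x * ∑ i, ∑ j, a x i j * pd2 u i j x := by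
      simp_rw [hstep, Finset.sum_add_distrib]
      rw [h1, h2]
    rw [key]; ring
  refine ⟨main, ?_⟩
  intro u hu f
  constructor
  · intro h x
    rw [main u hu x, h x]
  · intro h x
    have h1 := main u hu x
    rw [h x] at h1
    exact mul_left_cancel₀ (hm_pos x).ne' h1.symm
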